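/- Let n and k be positive integers with k ≤ n, and let B be a subset of (Z/2)^n \ {0} containing an even number of k-odd vectors (a vector is k-odd if its k-th entry is 1). Then there exists an n-component Gauss phrase p such that B_k(p) = B and every component of p other than the k-th contains no single-component letters. -/

import Mathlib

/-- A word is a finite sequence of letters; we take the letters to be natural numbers. -/
abbrev Word := List ℕ

/-- An `n`-component phrase: an `n`-tuple of words. -/
abbrev Phrase (n : ℕ) := Fin n → Word

/-- The concatenation of all the components of a phrase. -/
def totalWord {n : ℕ} (p : Phrase n) : Word := (List.ofFn p).flatten

/-- A Gauss word: every letter that appears does so exactly twice. -/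
def IsGaussWord (w : Word) : Prop := ∀ a ∈ w, w.count a = 2

/-- A Gauss phrase: the concatenation of the components is a Gauss word. -/
def IsGaussPhrase {n : ℕ} (p : Phrase n) : Prop := IsGaussWord (totalWord p)

/-- The phrase written as a single word with separators (`none`) between components. -/
def sepWord {n : ℕ} (p : Phrase n) : List (Option ℕ) :=
  List.intercalate [none] (List.ofFn fun i => (p i).map some)

/-- A single open homotopy move: isomorphism, H1, H2 or H3.  Adjacency of two letters
in `sepWord p` means exactly that they are adjacent inside a single component. -/
inductive OpenMove {n : ℕ} : Phrase n → Phrase n → Prop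
  | iso (p : Phrase n) (f : ℕ → ℕ) (hf : Function.Bijective f) :
      OpenMove p (fun i => (p i).map f)
  | h1 (p q : Phrase n) (A : ℕ) (x y : List (Option ℕ))
      (hA : some A ∉ x ++ y)
      (hp : sepWord p = x ++ some A :: some A :: y)
      (hq : sepWord q = x ++ y) : OpenMove p q
  | h2 (p q : Phrase n) (A B : ℕ) (x y z : List (Option ℕ))
      (hAB : A ≠ B)
      (hA : some A ∉ x ++ y ++ z) (hB : some B ∉ x ++ y ++ z)
      (hp : sepWord p = x ++ some A :: some B :: (y ++ some B :: some A :: z))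
      (hq : sepWord q = x ++ y ++ z) : OpenMove p q
  | h3 (p q : Phrase n) (A B C : ℕ) (w x y z : List (Option ℕ))
      (hAB : A ≠ B) (hAC : A ≠ C) (hBC : B ≠ C)
      (hA : some A ∉ w ++ x ++ y ++ z) (hB : some B ∉ w ++ x ++ y ++ z)
      (hC : some C ∉ w ++ x ++ y ++ z)
      (hp : sepWord p =
        w ++ some A :: some B :: (x ++ some A :: some C :: (y ++ some B :: some C :: z)))
      (hq : sepWord q =
        w ++ some B :: some A :: (x ++ some C :: some A :: (y ++ some C :: some B :: z))) :
      OpenMove p q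

/-- The shift move: move the first letter of a component to its end. -/
inductive ShiftMove {n : ℕ} : Phrase n → Phrase n → Prop
  | shift (p : Phrase n) (k : Fin n) (A : ℕ) (y : Word) (hp : p k = A :: y) :
      ShiftMove p (Function.update p k (y ++ [A]))

/-- Open homotopy: the equivalence relation generated by isomorphisms and the
moves H1, H2, H3 (and their inverses). -/
def OpenHomotopic {n : ℕ} (p q : Phrase n) : Prop :=
  Relation.EqvGen (@OpenMove n) p q

/-- Homotopy: the equivalence relation generated by isomorphisms, shift moves and the
moves H1, H2, H3 (and their inverses). -/
def Homotopic {n : ℕ} (p q : Phrase n) : Prop :=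
  Relation.EqvGen (fun a b => OpenMove a b ∨ ShiftMove a b) p q

/-- The linking matrix of a phrase: the `(i,j)` entry, for `i ≠ j`, is the number
modulo 2 of (two-component) letters with one occurrence in component `i` and the
other occurrence in component `j`; the diagonal entries are `0`. -/
def linkingMatrix {n : ℕ} (p : Phrase n) : Matrix (Fin n) (Fin n) (ZMod 2) :=
  Matrix.of fun i j =>
    if i = j then 0
    else (((totalWord p).toFinset.filter
        fun a => (p i).count a = 1 ∧ (p j).count a = 1).card : ZMod 2)

/-- The subword strictly between the two occurrences of the letter `a` in `w`
(for a letter occurring exactly twice in `w`). -/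
def betweenWord (w : Word) (a : ℕ) : Word :=
  (w.drop (w.idxOf a + 1)).takeWhile fun b => b ≠ a

/-- Fukunaga's `T` invariant: `Tk p k` is the number, modulo 2, of odd-parity
single-component letters in the `k`-th component of `p`. -/
def Tk {n : ℕ} (p : Phrase n) (k : Fin n) : ZMod 2 :=
  (((p k).toFinset.filter
      fun a => (p k).count a = 2 ∧ Odd (betweenWord (p k) a).length).card : ZMod 2)

/-- The linking vector of a subword `w` of the `k`-th component of `p`: the `i`-th entry
is the number modulo 2 of letters occurring exactly once in `w` whose other occurrence
lies in the `i`-th component of `p`. -/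
def linkVec {n : ℕ} (p : Phrase n) (k : Fin n) (w : Word) : Fin n → ZMod 2 :=
  fun i =>
    ((w.toFinset.filter fun a => w.count a = 1 ∧
        (if i = k then (p k).count a = 2 else a ∈ p i)).card : ZMod 2)

/-- The linking vector of a single-component letter `a` of the `k`-th component:
the linking vector of the word between its two occurrences. -/
def letterVec {n : ℕ} (p : Phrase n) (k : Fin n) (a : ℕ) : Fin n → ZMod 2 :=
  linkVec p k (betweenWord (p k) a)

/-- `Bk p k`: the set of nonzero vectors `v ∈ (ℤ/2)ⁿ` which are the linking vector of an
odd number of single-component letters of the `k`-th component of `p`. -/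
def Bk {n : ℕ} (p : Phrase n) (k : Fin n) : Finset (Fin n → ZMod 2) :=
  Finset.univ.filter fun v => v ≠ 0 ∧
    Odd (((p k).toFinset.filter fun a => (p k).count a = 2 ∧ letterVec p k a = v).card)

/-- `Ok p k`: the set of orbits of `(ℤ/2)ⁿ` under translation by the linking vector of the
`k`-th component, other than the orbit of `0`, which contain the linking vector of an odd
number of single-component letters of the `k`-th component.  An orbit is recorded as the
finite set of its elements. -/
def Ok {n : ℕ} (p : Phrase n) (k : Fin n) : Finset (Finset (Fin n → ZMod 2)) :=
  Finset.univ.filter fun O =>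
    (∃ v : Fin n → ZMod 2, O = {v, v + linkVec p k (p k)}) ∧
    (0 : Fin n → ZMod 2) ∉ O ∧
    Odd (((p k).toFinset.filter fun a => (p k).count a = 2 ∧ letterVec p k a ∈ O).card)

/-!
Juxtaposing two phrases component by component, with disjoint sets of letters, adds up the
numbers of single-component letters with a given linking vector, since a linking vector only
sees the letters between the two occurrences. So the realizable sets are closed under symmetric
difference, and it suffices to realize `{v}` for each `k`-even `v` and `{v, w}` for each pair of
`k`-odd vectors; the even number of `k`-odd vectors in `B` lets them be paired off.
-/

namespace List

theorem takeWhile_ne_append_cons {α : Type*} [DecidableEq α] {a : α} {y : List α} (hy : a ∉ y)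
    (z : List α) :
    (y ++ a :: z).takeWhile (fun b => b ≠ a) = y := by
  rw [takeWhile_append_of_pos fun b hb => by simpa using ne_of_mem_of_not_mem hb hy]
  simp

theorem exists_eq_append_cons_append_cons_of_count_eq_two {α : Type*} [BEq α] [LawfulBEq α]
    {w : List α} {a : α} (h : w.count a = 2) :
    ∃ x y z, w = x ++ a :: (y ++ a :: z) ∧ a ∉ x ∧ a ∉ y ∧ a ∉ z := by
  obtain ⟨x, t, hx, rfl, -⟩ := exists_erase_eq (count_pos_iff.mp (by omega : 0 < w.count a))
  have ht : t.count a = 1 := by simpa [count_append, count_eq_zero.mpr hx] using h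
  obtain ⟨y, z, hy, rfl, -⟩ := exists_erase_eq (count_pos_iff.mp (by omega : 0 < t.count a))
  refine ⟨x, y, z, rfl, hx, hy, fun hz => ?_⟩
  simp [count_append, count_eq_zero.mpr hy] at ht
  exact count_eq_zero.mp ht hz

end List

theorem Finset.sdiff_symmDiff_of_subset {α : Type*} [DecidableEq α] {s t : Finset α}
    (h : t ⊆ s) : symmDiff (s \ t) t = s := by
  ext a
  have := @h a
  simp only [Finset.mem_symmDiff, Finset.mem_sdiff]
  tauto

theorem mem_totalWord {n : ℕ} {p : Phrase n} {a : ℕ} :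
    a ∈ totalWord p ↔ ∃ i, a ∈ p i := by
  simp [totalWord]

theorem count_totalWord {n : ℕ} (p : Phrase n) (a : ℕ) :
    (totalWord p).count a = ∑ i, (p i).count a := by
  rw [totalWord, List.count_flatten, List.map_ofFn, List.sum_ofFn]; rfl

theorem betweenWord_append_cons_append_cons {x y : Word} {a : ℕ} (hx : a ∉ x) (hy : a ∉ y)
    (z : Word) : betweenWord (x ++ a :: (y ++ a :: z)) a = y := by
  rw [betweenWord, List.idxOf_append_of_notMem hx, List.idxOf_cons_self, add_zero,
    List.drop_length_add_append, List.drop_succ_cons, List.drop_zero,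
    List.takeWhile_ne_append_cons hy]

theorem mem_of_mem_betweenWord {w : Word} {a b : ℕ} (h : b ∈ betweenWord w a) : b ∈ w :=
  (List.drop_sublist _ _).subset ((List.takeWhile_sublist _).subset h)

theorem betweenWord_append_left {u : Word} {a : ℕ} (h : u.count a = 2) (g : Word) :
    betweenWord (u ++ g) a = betweenWord u a := by
  obtain ⟨x, y, z, rfl, hx, hy, -⟩ := List.exists_eq_append_cons_append_cons_of_count_eq_two h
  simp only [List.append_assoc, List.cons_append, betweenWord_append_cons_append_cons hx hy]

theorem betweenWord_append_right {u g : Word} {a : ℕ} (hu : a ∉ u) (h : g.count a = 2) :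
    betweenWord (u ++ g) a = betweenWord g a := by
  obtain ⟨x, y, z, rfl, hx, hy, -⟩ := List.exists_eq_append_cons_append_cons_of_count_eq_two h
  rw [betweenWord_append_cons_append_cons hx hy, ← List.append_assoc,
    betweenWord_append_cons_append_cons (by simp [hu, hx]) hy]

theorem linkVec_congr {n : ℕ} {p q : Phrase n} {k : Fin n} {w : Word}
    (hk : ∀ a ∈ w, (p k).count a = 2 ↔ (q k).count a = 2)
    (hi : ∀ i, i ≠ k → ∀ a ∈ w, a ∈ p i ↔ a ∈ q i) :
    linkVec p k w = linkVec q k w := by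
  funext i
  unfold linkVec
  congr 2
  refine Finset.filter_congr fun a ha => and_congr_right' ?_
  rw [List.mem_toFinset] at ha
  split_ifs with hik
  · exact hk a ha
  · exact hi i hik a ha

theorem linkVec_append {n : ℕ} (p : Phrase n) (k : Fin n) {x y : Word} (hxy : x.Disjoint y) :
    linkVec p k (x ++ y) = linkVec p k x + linkVec p k y := by
  funext i
  have hx : ∀ a ∈ x, (x ++ y).count a = x.count a := fun a ha => by
    simp [List.count_eq_zero.mpr (hxy ha)]
  have hy : ∀ a ∈ y, (x ++ y).count a = y.count a := fun a ha => by
    simp [List.count_eq_zero.mpr (fun h => hxy h ha)]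
  simp only [linkVec, Pi.add_apply, List.toFinset_append, Finset.filter_union]
  rw [Finset.card_union_of_disjoint, Nat.cast_add]
  · congr 3
    · exact Finset.filter_congr fun a ha => by rw [hx a (List.mem_toFinset.mp ha)]
    · exact Finset.filter_congr fun a ha => by rw [hy a (List.mem_toFinset.mp ha)]
  · exact Finset.disjoint_filter_filter
      (List.disjoint_toFinset_iff_disjoint.mpr hxy)

section Realizes

variable {n : ℕ}

def scCount (p : Phrase n) (k : Fin n) (v : Fin n → ZMod 2) : ℕ :=
  ((p k).toFinset.filter fun a => (p k).count a = 2 ∧ letterVec p k a = v).card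

structure Realizes (p : Phrase n) (k : Fin n) (S : Finset (Fin n → ZMod 2)) : Prop where
  isGaussPhrase : IsGaussPhrase p
  count_le_one : ∀ i, i ≠ k → ∀ a, (p i).count a ≤ 1
  odd_scCount_iff : ∀ v, Odd (scCount p k v) ↔ v ∈ S

theorem Realizes.Bk_eq {p : Phrase n} {k : Fin n} {S : Finset (Fin n → ZMod 2)}
    (h : Realizes p k S) (h0 : 0 ∉ S) : Bk p k = S := by
  ext v
  simp only [Bk, Finset.mem_filter, Finset.mem_univ, true_and]
  rw [← scCount, h.odd_scCount_iff]
  exact ⟨And.right, fun hv => ⟨ne_of_mem_of_not_mem hv h0, hv⟩⟩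

theorem realizes_empty (k : Fin n) : Realizes (fun _ => []) k ∅ where
  isGaussPhrase a ha := by simp [mem_totalWord] at ha
  count_le_one := by simp
  odd_scCount_iff := by simp [scCount]

variable {p g : Phrase n} {k : Fin n}

theorem letterVec_append_left (hpg : (totalWord p).Disjoint (totalWord g)) {a : ℕ}
    (h : (p k).count a = 2) : letterVec (fun i => p i ++ g i) k a = letterVec p k a := by
  have hg : ∀ i, ∀ b ∈ p k, b ∉ g i := fun i b hb hb' =>
    hpg (mem_totalWord.mpr ⟨k, hb⟩) (mem_totalWord.mpr ⟨i, hb'⟩)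
  unfold letterVec
  rw [betweenWord_append_left h]
  refine linkVec_congr (fun b hb => ?_) (fun i _ b hb => ?_)
  · simp [List.count_eq_zero.mpr (hg k b (mem_of_mem_betweenWord hb))]
  · simp [hg i b (mem_of_mem_betweenWord hb)]

theorem letterVec_append_right (hpg : (totalWord p).Disjoint (totalWord g)) {a : ℕ}
    (h : (g k).count a = 2) : letterVec (fun i => p i ++ g i) k a = letterVec g k a := by
  have hp : ∀ i, ∀ b ∈ g k, b ∉ p i := fun i b hb hb' =>
    hpg (mem_totalWord.mpr ⟨i, hb'⟩) (mem_totalWord.mpr ⟨k, hb⟩)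
  unfold letterVec
  rw [betweenWord_append_right (hp k a (List.count_pos_iff.mp (by omega))) h]
  refine linkVec_congr (fun b hb => ?_) (fun i _ b hb => ?_)
  · simp [List.count_eq_zero.mpr (hp k b (mem_of_mem_betweenWord hb))]
  · simp [hp i b (mem_of_mem_betweenWord hb)]

theorem scCount_append (hpg : (totalWord p).Disjoint (totalWord g)) (v : Fin n → ZMod 2) :
    scCount (fun i => p i ++ g i) k v = scCount p k v + scCount g k v := by
  have hdisj : (p k).Disjoint (g k) := fun a hp hg =>
    hpg (mem_totalWord.mpr ⟨k, hp⟩) (mem_totalWord.mpr ⟨k, hg⟩)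
  unfold scCount
  rw [List.toFinset_append, Finset.filter_union, Finset.card_union_of_disjoint]
  · congr 2
    · refine Finset.filter_congr fun a ha => ?_
      rw [List.count_append, List.count_eq_zero.mpr (hdisj (List.mem_toFinset.mp ha)), add_zero]
      exact and_congr_right fun h => by rw [letterVec_append_left hpg h]
    · refine Finset.filter_congr fun a ha => ?_
      rw [List.count_append,
        List.count_eq_zero.mpr (fun h => hdisj h (List.mem_toFinset.mp ha)), zero_add]
      exact and_congr_right fun h => by rw [letterVec_append_right hpg h]
  · exact Finset.disjoint_filter_filter (List.disjoint_toFinset_iff_disjoint.mpr hdisj)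

theorem Realizes.append {S T : Finset (Fin n → ZMod 2)} (hp : Realizes p k S)
    (hg : Realizes g k T) (hpg : (totalWord p).Disjoint (totalWord g)) :
    Realizes (fun i => p i ++ g i) k (symmDiff S T) where
  isGaussPhrase a ha := by
    have hcount : (totalWord fun i => p i ++ g i).count a =
        (totalWord p).count a + (totalWord g).count a := by
      simp only [count_totalWord, List.count_append, Finset.sum_add_distrib]
    obtain ⟨i, hi⟩ := mem_totalWord.mp ha
    rcases List.mem_append.mp hi with hi | hi
    · have ha := mem_totalWord.mpr ⟨i, hi⟩
      rw [hcount, hp.isGaussPhrase a ha, List.count_eq_zero.mpr (hpg ha)]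
    · have ha := mem_totalWord.mpr ⟨i, hi⟩
      rw [hcount, hg.isGaussPhrase a ha, List.count_eq_zero.mpr (fun h => hpg h ha)]
  count_le_one i hik a := by
    have hp1 := hp.count_le_one i hik a
    have hg1 := hg.count_le_one i hik a
    rw [List.count_append]
    by_cases ha : a ∈ p i
    · rw [List.count_eq_zero.mpr fun h =>
        hpg (mem_totalWord.mpr ⟨i, ha⟩) (mem_totalWord.mpr ⟨i, h⟩)]
      omega
    · rw [List.count_eq_zero.mpr ha]
      omega
  odd_scCount_iff v := by
    rw [scCount_append hpg, Nat.odd_add, ← Nat.not_odd_iff_even, hp.odd_scCount_iff,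
      hg.odd_scCount_iff, Finset.mem_symmDiff]
    tauto

theorem Realizes.exists_symmDiff {S T : Finset (Fin n → ZMod 2)} (hp : Realizes p k S)
    {G : ℕ → Phrase n} (hG : ∀ N, Realizes (G N) k T)
    (hGN : ∀ N, ∀ a ∈ totalWord (G N), N ≤ a) :
    ∃ q : Phrase n, Realizes q k (symmDiff S T) := by
  obtain ⟨N, hN⟩ : ∃ N, ∀ a ∈ totalWord p, a < N :=
    ⟨(totalWord p).sum + 1, fun a ha => Nat.lt_succ_of_le (List.le_sum_of_mem ha)⟩
  exact ⟨_, hp.append (hG N) fun a ha ha' => (hN a ha).not_ge (hGN N a ha')⟩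

end Realizes

section Gadget

variable {n : ℕ}

def crossPhrase (L : Word) : Phrase n := fun i => L.filter fun a => a % n = i

-- The letter `n * m + i` crosses over to component `i`, its residue mod `n`; the layer `m` is
-- chosen large to keep the letters fresh.
def crossList (k : Fin n) (v : Fin n → ZMod 2) (m : ℕ) : Word :=
  ((List.finRange n).filter fun i => i ≠ k ∧ v i = 1).map fun i => n * m + i.val

def gadget (k : Fin n) (L c : Word) : Phrase n := Function.update (crossPhrase L) k c

theorem count_crossPhrase (L : Word) (i : Fin n) (a : ℕ) :
    (crossPhrase L i).count a = if a % n = i then L.count a else 0 := by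
  unfold crossPhrase
  split_ifs with h
  · exact List.count_filter (by simpa using h)
  · exact List.count_eq_zero.mpr fun ha => h (by simpa using (List.mem_filter.mp ha).2)

theorem mem_crossList {k : Fin n} {v : Fin n → ZMod 2} {m a : ℕ} :
    a ∈ crossList k v m ↔ ∃ i, (i ≠ k ∧ v i = 1) ∧ n * m + i = a := by
  simp [crossList]

theorem nodup_crossList (k : Fin n) (v : Fin n → ZMod 2) (m : ℕ) : (crossList k v m).Nodup :=
  ((List.nodup_finRange n).filter _).map fun i j h => Fin.ext (by simpa using h)

theorem mod_ne_of_mem_crossList {k : Fin n} {v : Fin n → ZMod 2} {m a : ℕ}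
    (h : a ∈ crossList k v m) : a % n ≠ k := by
  obtain ⟨i, ⟨hik, -⟩, rfl⟩ := mem_crossList.mp h
  simpa [Nat.mod_eq_of_lt i.isLt, Fin.val_inj] using hik

theorem bounds_of_mem_crossList {k : Fin n} {v : Fin n → ZMod 2} {m a : ℕ}
    (h : a ∈ crossList k v m) : n * m ≤ a ∧ a < n * (m + 1) := by
  obtain ⟨i, -, rfl⟩ := mem_crossList.mp h
  have := i.isLt
  constructor <;> nlinarith

theorem notMem_crossList_of_le {k : Fin n} {v : Fin n → ZMod 2} {m a : ℕ}
    (h : n * (m + 1) ≤ a) : a ∉ crossList k v m :=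
  fun ha => (bounds_of_mem_crossList ha).2.not_ge h

theorem filter_mod_crossList (k : Fin n) (v : Fin n → ZMod 2) (m : ℕ) (i : Fin n) :
    (crossList k v m).toFinset.filter (fun a => a % n = i) =
      if i ≠ k ∧ v i = 1 then {n * m + i} else ∅ := by
  ext a
  simp only [Finset.mem_filter, List.mem_toFinset, mem_crossList]
  split_ifs with hi
  · simp only [Finset.mem_singleton]
    constructor
    · rintro ⟨⟨j, -, rfl⟩, hj⟩
      simp [Nat.mod_eq_of_lt j.isLt] at hj
      simp [Fin.ext hj]
    · rintro rfl
      exact ⟨⟨i, hi, rfl⟩, by simp [Nat.mod_eq_of_lt i.isLt]⟩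
  · simp only [Finset.notMem_empty, iff_false, not_and]
    rintro ⟨j, hj, rfl⟩ hji
    simp [Nat.mod_eq_of_lt j.isLt] at hji
    exact hi (Fin.ext hji ▸ hj)

variable {k : Fin n} {L c : Word}

theorem count_totalWord_crossPhrase (hn : 0 < n) (L : Word) (a : ℕ) :
    (totalWord (crossPhrase (n := n) L)).count a = L.count a := by
  rw [count_totalWord, Finset.sum_eq_single ⟨a % n, Nat.mod_lt a hn⟩]
  · simp [count_crossPhrase]
  · intro i _ hi
    rw [count_crossPhrase, if_neg fun h => hi (Fin.ext h.symm)]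
  · simp

theorem gadget_self : gadget k L c k = c := Function.update_self ..

theorem gadget_of_ne {i : Fin n} (hik : i ≠ k) : gadget k L c i = crossPhrase L i :=
  Function.update_of_ne hik ..

theorem count_totalWord_gadget (hLk : ∀ a ∈ L, a % n ≠ k) (a : ℕ) :
    (totalWord (gadget k L c)).count a = L.count a + c.count a := by
  have hcomp : ∀ i, (gadget k L c i).count a =
      (crossPhrase L i).count a + if i = k then c.count a else 0 := fun i => by
    rcases eq_or_ne i k with rfl | hik
    · have : (crossPhrase L i).count a = 0 := by
        rw [count_crossPhrase]
        split_ifs with h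
        · exact List.count_eq_zero.mpr fun ha => hLk a ha h
        · rfl
      rw [gadget_self, this, if_pos rfl, zero_add]
    · rw [gadget_of_ne hik, if_neg hik, add_zero]
  rw [count_totalWord, Finset.sum_congr rfl fun i _ => hcomp i, Finset.sum_add_distrib,
    ← count_totalWord, count_totalWord_crossPhrase k.pos, Finset.sum_ite_eq']
  simp

structure GadgetSpec (k : Fin n) (L c : Word) (s : Finset ℕ) : Prop where
  nodup : L.Nodup
  mod_ne : ∀ a ∈ L, a % n ≠ k
  notMem : ∀ a ∈ s, a ∉ L
  count_eq : ∀ a, c.count a = L.count a + if a ∈ s then 2 else 0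

namespace GadgetSpec

variable {s : Finset ℕ}

theorem count_of_mem (hg : GadgetSpec k L c s) {a : ℕ} (ha : a ∈ L) : c.count a = 1 := by
  rw [hg.count_eq, List.count_eq_one_of_mem hg.nodup ha, if_neg fun h => hg.notMem a h ha]

theorem count_eq_two_iff (hg : GadgetSpec k L c s) (a : ℕ) : c.count a = 2 ↔ a ∈ s := by
  by_cases ha : a ∈ s
  · simp [hg.count_eq, ha, List.count_eq_zero.mpr (hg.notMem a ha)]
  · rw [hg.count_eq, if_neg ha, add_zero]
    have := List.nodup_iff_count_le_one.mp hg.nodup a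
    simp only [ha, iff_false]
    omega

theorem isGaussPhrase (hg : GadgetSpec k L c s) : IsGaussPhrase (gadget k L c) := by
  intro a ha
  rw [← List.count_pos_iff, count_totalWord_gadget hg.mod_ne] at ha
  rw [count_totalWord_gadget hg.mod_ne]
  by_cases haL : a ∈ L
  · rw [hg.count_of_mem haL, List.count_eq_one_of_mem hg.nodup haL]
  · rw [hg.count_eq, List.count_eq_zero.mpr haL] at ha ⊢
    split_ifs at ha ⊢ <;> omega

theorem count_le_one (hg : GadgetSpec k L c s) {i : Fin n} (hik : i ≠ k) (a : ℕ) :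
    (gadget k L c i).count a ≤ 1 := by
  rw [gadget_of_ne hik, count_crossPhrase]
  split_ifs
  · exact List.nodup_iff_count_le_one.mp hg.nodup a
  · exact zero_le_one

theorem linkVec_crossList (hg : GadgetSpec k L c s) {v : Fin n → ZMod 2} {m : ℕ}
    (hsub : ∀ a ∈ crossList k v m, a ∈ L) :
    linkVec (gadget k L c) k (crossList k v m) = Function.update v k 0 := by
  have hcount : ∀ a ∈ crossList k v m, (crossList k v m).count a = 1 :=
    fun a => List.count_eq_one_of_mem (nodup_crossList k v m)
  funext i
  unfold linkVec
  rcases eq_or_ne i k with rfl | hik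
  · rw [Function.update_self, Finset.filter_false_of_mem, Finset.card_empty, Nat.cast_zero]
    intro a ha
    rw [List.mem_toFinset] at ha
    simp [gadget_self, hg.count_of_mem (hsub a ha)]
  · simp only [Function.update_of_ne hik, if_neg hik]
    have hfilter : (crossList k v m).toFinset.filter (fun a => (crossList k v m).count a = 1 ∧
        a ∈ gadget k L c i) = (crossList k v m).toFinset.filter (fun a => a % n = i) := by
      refine Finset.filter_congr fun a ha => ?_
      rw [List.mem_toFinset] at ha
      simp [hcount a ha, gadget_of_ne hik, crossPhrase, hsub a ha]
    rw [hfilter, filter_mod_crossList]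
    by_cases hv : v i = 1
    · simp [hik, hv]
    · simpa [hik, hv] using ((by decide : ∀ x : ZMod 2, x ≠ 1 → 0 = x) _ hv)

theorem linkVec_singleton (hg : GadgetSpec k L c s) {a : ℕ} (ha : a ∈ s) :
    linkVec (gadget k L c) k [a] = Pi.single k 1 := by
  funext i
  rcases eq_or_ne i k with rfl | hik
  · simp [linkVec, gadget_self, Finset.filter_singleton, (hg.count_eq_two_iff a).mpr ha]
  · simp [linkVec, gadget_of_ne hik, hik, crossPhrase, Finset.filter_singleton, hg.notMem a ha]

theorem scCount_eq (hg : GadgetSpec k L c s) (u : Fin n → ZMod 2) :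
    scCount (gadget k L c) k u = (s.filter fun a => letterVec (gadget k L c) k a = u).card := by
  unfold scCount
  congr 1
  ext a
  simp only [gadget_self, Finset.mem_filter, List.mem_toFinset, hg.count_eq_two_iff]
  refine ⟨fun h => h.2, fun h => ⟨List.count_pos_iff.mp ?_, h⟩⟩
  rw [(hg.count_eq_two_iff a).mpr h.1]
  omega

theorem mem_of_mem_totalWord (hg : GadgetSpec k L c s) {a : ℕ}
    (ha : a ∈ totalWord (gadget k L c)) : a ∈ L ∨ a ∈ s := by
  rw [← List.count_pos_iff, count_totalWord_gadget hg.mod_ne, hg.count_eq] at ha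
  by_cases has : a ∈ s
  · exact Or.inr has
  · rw [if_neg has] at ha
    exact Or.inl (List.count_pos_iff.mp (by omega))

end GadgetSpec

end Gadget

section Gadgets

variable {n : ℕ} {k : Fin n} {v w : Fin n → ZMod 2} {m : ℕ}

/-- The `k`-th component is `A x A`, where `x` crosses each component `i ≠ k` with `v i = 1`
once, so that the linking vector of `A` is `v` away from the `k`-th entry. -/
def gadget1 (k : Fin n) (v : Fin n → ZMod 2) (m : ℕ) : Phrase n :=
  gadget k (crossList k v m) (n * (m + 1) :: (crossList k v m ++ [n * (m + 1)]))

/-- The `k`-th component is `A x B A y B`, with `x` and `y` crossing as in `gadget1` for `v`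
and `w`; the interleaved letters `A` and `B` each contribute `1` to the `k`-th entry of the
other's linking vector. -/
def gadget2 (k : Fin n) (v w : Fin n → ZMod 2) (m : ℕ) : Phrase n :=
  gadget k (crossList k v m ++ crossList k w (m + 1))
    (n * (m + 2) :: (crossList k v m ++
      (n * (m + 2) + 1) :: n * (m + 2) :: (crossList k w (m + 1) ++ [n * (m + 2) + 1])))

theorem gadgetSpec_gadget1 :
    GadgetSpec k (crossList k v m) (n * (m + 1) :: (crossList k v m ++ [n * (m + 1)]))
      {n * (m + 1)} := by
  have hA : n * (m + 1) ∉ crossList k v m := notMem_crossList_of_le le_rfl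
  refine ⟨nodup_crossList k v m, fun _ => mod_ne_of_mem_crossList, by simpa using hA,
    fun a => ?_⟩
  simp only [List.count_cons, List.count_append, List.count_nil, beq_iff_eq,
    Finset.mem_singleton]
  split_ifs <;> omega

theorem gadgetSpec_gadget2 :
    GadgetSpec k (crossList k v m ++ crossList k w (m + 1))
      (n * (m + 2) :: (crossList k v m ++
        (n * (m + 2) + 1) :: n * (m + 2) :: (crossList k w (m + 1) ++ [n * (m + 2) + 1])))
      {n * (m + 2), n * (m + 2) + 1} := by
  have hL : ∀ a ∈ crossList k v m ++ crossList k w (m + 1), a < n * (m + 2) := fun a ha => by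
    rcases List.mem_append.mp ha with h | h
    · have := (bounds_of_mem_crossList h).2; nlinarith
    · exact (bounds_of_mem_crossList h).2
  refine ⟨?_, fun a ha => ?_, fun a ha haL => ?_, fun a => ?_⟩
  · refine List.nodup_append.mpr ⟨nodup_crossList k v m, nodup_crossList k w (m + 1), ?_⟩
    intro a ha b hb hab
    have := (bounds_of_mem_crossList ha).2
    have := (bounds_of_mem_crossList hb).1
    omega
  · rcases List.mem_append.mp ha with h | h <;> exact mod_ne_of_mem_crossList h
  · have := hL a haL
    simp only [Finset.mem_insert, Finset.mem_singleton] at ha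
    omega
  · simp only [List.count_cons, List.count_append, List.count_nil, beq_iff_eq,
      Finset.mem_insert, Finset.mem_singleton]
    split_ifs <;> omega

theorem update_add_single_of_eq_one (hvk : v k = 1) :
    Function.update v k 0 + Pi.single k 1 = v := by
  funext i
  rcases eq_or_ne i k with rfl | hik
  · simp [hvk]
  · simp [hik]

theorem letterVec_gadget1 :
    letterVec (gadget1 k v m) k (n * (m + 1)) = Function.update v k 0 := by
  rw [letterVec, gadget1, gadget_self, ← List.nil_append (n * (m + 1) :: _),
    betweenWord_append_cons_append_cons List.not_mem_nil (notMem_crossList_of_le le_rfl)]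
  exact gadgetSpec_gadget1.linkVec_crossList fun _ => id

theorem letterVec_gadget2_left :
    letterVec (gadget2 k v w m) k (n * (m + 2)) = Function.update v k 0 + Pi.single k 1 := by
  have hA : n * (m + 2) ∉ crossList k v m ++ [n * (m + 2) + 1] := by
    simp [notMem_crossList_of_le (by nlinarith : n * (m + 1) ≤ n * (m + 2))]
  have hB : n * (m + 2) + 1 ∉ crossList k v m := notMem_crossList_of_le (by nlinarith)
  have hbw := betweenWord_append_cons_append_cons List.not_mem_nil hA
    (crossList k w (m + 1) ++ [n * (m + 2) + 1])
  simp only [List.nil_append, List.append_assoc, List.cons_append] at hbw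
  rw [letterVec, gadget2, gadget_self, hbw, linkVec_append _ _ (List.disjoint_singleton.mpr hB),
    gadgetSpec_gadget2.linkVec_crossList fun _ => List.mem_append_left _,
    gadgetSpec_gadget2.linkVec_singleton (by simp)]

theorem letterVec_gadget2_right :
    letterVec (gadget2 k v w m) k (n * (m + 2) + 1) = Pi.single k 1 + Function.update w k 0 := by
  have hBv : n * (m + 2) + 1 ∉ n * (m + 2) :: crossList k v m := by
    simp [notMem_crossList_of_le (by nlinarith : n * (m + 1) ≤ n * (m + 2) + 1)]
  have hBw : n * (m + 2) + 1 ∉ n * (m + 2) :: crossList k w (m + 1) := by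
    simp [notMem_crossList_of_le (by nlinarith : n * (m + 1 + 1) ≤ n * (m + 2) + 1)]
  have hA : n * (m + 2) ∉ crossList k w (m + 1) := notMem_crossList_of_le le_rfl
  have hbw := betweenWord_append_cons_append_cons hBv hBw []
  simp only [List.cons_append] at hbw
  rw [letterVec, gadget2, gadget_self, hbw, ← List.singleton_append (l := crossList k w (m + 1)),
    linkVec_append _ _ (List.singleton_disjoint.mpr hA),
    gadgetSpec_gadget2.linkVec_crossList fun _ => List.mem_append_right _,
    gadgetSpec_gadget2.linkVec_singleton (by simp)]

theorem le_of_mem_totalWord_gadget1 {m a : ℕ} (ha : a ∈ totalWord (gadget1 k v m)) :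
    m ≤ a := by
  have hm : m ≤ n * m := Nat.le_mul_of_pos_left m k.pos
  rcases gadgetSpec_gadget1.mem_of_mem_totalWord ha with h | h
  · exact hm.trans (bounds_of_mem_crossList h).1
  · rw [Finset.mem_singleton.mp h]
    nlinarith

theorem le_of_mem_totalWord_gadget2 {m a : ℕ} (ha : a ∈ totalWord (gadget2 k v w m)) :
    m ≤ a := by
  have hm : m ≤ n * m := Nat.le_mul_of_pos_left m k.pos
  rcases gadgetSpec_gadget2.mem_of_mem_totalWord ha with h | h
  · rcases List.mem_append.mp h with h | h
    · exact hm.trans (bounds_of_mem_crossList h).1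
    · have := (bounds_of_mem_crossList h).1
      nlinarith
  · simp only [Finset.mem_insert, Finset.mem_singleton] at h
    rcases h with rfl | rfl <;> nlinarith

theorem realizes_gadget1 (hvk : v k = 0) (m : ℕ) : Realizes (gadget1 k v m) k {v} where
  isGaussPhrase := gadgetSpec_gadget1.isGaussPhrase
  count_le_one _ := gadgetSpec_gadget1.count_le_one
  odd_scCount_iff u := by
    have h : scCount (gadget1 k v m) k u = _ := gadgetSpec_gadget1.scCount_eq u
    rw [h, Finset.filter_singleton, ← gadget1, letterVec_gadget1, ← hvk,
      Function.update_eq_self]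
    rcases eq_or_ne v u with rfl | hvu
    · simp
    · simp [hvu, Ne.symm hvu]

theorem realizes_gadget2 (hvk : v k = 1) (hwk : w k = 1) (hvw : v ≠ w) (m : ℕ) :
    Realizes (gadget2 k v w m) k {v, w} where
  isGaussPhrase := gadgetSpec_gadget2.isGaussPhrase
  count_le_one _ := gadgetSpec_gadget2.count_le_one
  odd_scCount_iff u := by
    have h : scCount (gadget2 k v w m) k u = _ := gadgetSpec_gadget2.scCount_eq u
    rw [h, Finset.filter_insert, Finset.filter_singleton, ← gadget2, letterVec_gadget2_left,
      letterVec_gadget2_right, update_add_single_of_eq_one hvk, add_comm (Pi.single k 1),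
      update_add_single_of_eq_one hwk]
    rcases eq_or_ne v u with rfl | hvu
    · simp [hvw.symm]
    · rcases eq_or_ne w u with rfl | hwu
      · simp [hvu]
      · simp [hvu, hwu, Ne.symm hvu, Ne.symm hwu]

variable {p : Phrase n} {S : Finset (Fin n → ZMod 2)}

theorem Realizes.exists_of_sdiff_singleton (hp : Realizes p k (S \ {v})) (hv : v ∈ S)
    (hvk : v k = 0) : ∃ q : Phrase n, Realizes q k S := by
  simpa [Finset.sdiff_symmDiff_of_subset (Finset.singleton_subset_iff.mpr hv)] using
    hp.exists_symmDiff (realizes_gadget1 hvk) fun _ _ => le_of_mem_totalWord_gadget1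

theorem Realizes.exists_of_sdiff_pair (hp : Realizes p k (S \ {v, w})) (hvwS : {v, w} ⊆ S)
    (hvk : v k = 1) (hwk : w k = 1) (hvw : v ≠ w) : ∃ q : Phrase n, Realizes q k S := by
  simpa [Finset.sdiff_symmDiff_of_subset hvwS] using
    hp.exists_symmDiff (realizes_gadget2 hvk hwk hvw) fun _ _ => le_of_mem_totalWord_gadget2

end Gadgets

theorem exists_realizes {n : ℕ} (k : Fin n) (S : Finset (Fin n → ZMod 2))
    (hS : Even (S.filter fun v => v k = 1).card) : ∃ p : Phrase n, Realizes p k S := by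
  induction S using Finset.strongInduction with
  | H S ih =>
  by_cases hS0 : ∃ v ∈ S, v k = 0
  · obtain ⟨v, hv, hvk⟩ := hS0
    have hS' : (S \ {v}).filter (fun u => u k = 1) = S.filter fun u => u k = 1 := by
      ext u
      rcases eq_or_ne u v with rfl | hu
      · simp [hvk]
      · simp [hu]
    obtain ⟨p, hp⟩ := ih (S \ {v}) (Finset.sdiff_ssubset (by simpa) (by simp)) (hS' ▸ hS)
    exact hp.exists_of_sdiff_singleton hv hvk
  obtain rfl | ⟨v, hv⟩ := S.eq_empty_or_nonempty
  · exact ⟨_, realizes_empty k⟩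
  push Not at hS0
  have hvk : v k = 1 := by simpa using (by decide : ∀ x : ZMod 2, x ≠ 0 → x = 1) _ (hS0 v hv)
  have hvS₁ : v ∈ S.filter fun u => u k = 1 := Finset.mem_filter.mpr ⟨hv, hvk⟩
  have hcard : 1 < (S.filter fun u => u k = 1).card := by
    obtain ⟨r, hr⟩ := hS
    have := Finset.card_pos.mpr ⟨v, hvS₁⟩
    omega
  obtain ⟨w, hwS₁, hwv⟩ := Finset.exists_mem_ne hcard v
  have hsub : {v, w} ⊆ S.filter fun u => u k = 1 :=
    Finset.insert_subset hvS₁ (Finset.singleton_subset_iff.mpr hwS₁)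
  have hsubS : {v, w} ⊆ S := hsub.trans (Finset.filter_subset _ _)
  have hS' : (S \ {v, w}).filter (fun u => u k = 1) = (S.filter fun u => u k = 1) \ {v, w} := by
    ext u
    simp only [Finset.mem_filter, Finset.mem_sdiff]
    tauto
  obtain ⟨p, hp⟩ := ih (S \ {v, w}) (Finset.sdiff_ssubset hsubS (by simp)) (by
    rw [hS', Finset.card_sdiff_of_subset hsub, Finset.card_pair hwv.symm]
    exact hS.tsub even_two)
  exact hp.exists_of_sdiff_pair hsubS hvk (Finset.mem_filter.mp hwS₁).2 hwv.symm

/-- any subset of `(ℤ/2)ⁿ \ {0}` with an even number of `k`-odd vectors is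
`B_k(p)` for some `n`-component Gauss phrase `p` all of whose single-component letters
lie in the `k`-th component. -/
theorem Bk_realizable {n : ℕ} (k : Fin n) (B : Finset (Fin n → ZMod 2))
    (h0 : (0 : Fin n → ZMod 2) ∉ B)
    (hev : Even ((B.filter fun v => v k = 1).card)) :
    ∃ p : Phrase n, IsGaussPhrase p ∧ Bk p k = B ∧
      ∀ i : Fin n, i ≠ k → ∀ a : ℕ, (p i).count a ≤ 1 := by
  obtain ⟨p, hp⟩ := exists_realizes k B hev
  exact ⟨p, hp.isGaussPhrase, hp.Bk_eq h0, hp.count_le_one⟩
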